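/- Let k be a field, 𝔤 a Lie algebra over k, 𝔥 an abelian Lie subalgebra of 𝔤, 𝔥̇ a k-subspace of 𝔥, and M a 𝔤-module that is the direct sum of its 𝔥-weight spaces. Suppose there exists ℓ ∈ ℕ such that every admissible chain of submodules of M has un-confined rank at most ℓ. If M admits at least one admissible chain of submodules, then there exist k₀ ∈ ℕ and an admissible chain C of submodules of M such that C is tail-k₀-confined. -/

import Mathlib

/-!
Choose an admissible chain `C` of maximal un-confined rank `r`; the bound `ℓ` makes the maximum
exist and finite. The un-confined quotients of `C` then sit among the first `k₀` terms for some
`k₀`, and any `k₀`-overlapped tail-extension of `C` inherits all of them. An un-confined quotient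
beyond position `k₀` would push its rank above `r`, so every such extension is `k₀`-confined.
-/

variable (k : Type*) [Field k] (g : Type*) [LieRing g] [LieAlgebra k g]
  (H : LieSubalgebra k g) (Hdot : Submodule k H)
  (M : Type*) [AddCommGroup M] [Module k M] [LieRingModule g M] [LieModule k g M]

/-- `v` is an `H`-weight vector of `M` of weight `μ`. -/
def IsWeightVec (μ : ↥H →ₗ[k] k) (v : M) : Prop :=
  ∀ h : H, ⁅(h : g), v⁆ = μ h • v

/-- The `μ`-weight space of `M` with respect to `H`. -/
def wtSpace (μ : ↥H →ₗ[k] k) : Submodule k M where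
  carrier := {v | IsWeightVec k g H M μ v}
  add_mem' := by
    intro a b ha hb h
    rw [lie_add, ha h, hb h, smul_add]
  zero_mem' := by
    intro h
    rw [lie_zero, smul_zero]
  smul_mem' := by
    intro c v hv h
    rw [lie_smul, hv h, smul_comm]

/-- `μ` lies in the support of the quotient module `P/Q`, that is, the `μ`-weight space of
`P/Q` is nonzero: there is `v ∈ P`, `v ∉ Q`, whose coset modulo `Q` is a weight vector of
weight `μ`. -/
def QuotHasWeight (P Q : LieSubmodule k g M) (μ : ↥H →ₗ[k] k) : Prop :=
  ∃ v ∈ P, v ∉ Q ∧ ∀ h : H, ⁅(h : g), v⁆ - μ h • v ∈ Q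

/-- The quotient module `P/Q` is confined: every weight in its support restricts to zero
on `Hdot`. -/
def QuotConfined (P Q : LieSubmodule k g M) : Prop :=
  ∀ μ : ↥H →ₗ[k] k, QuotHasWeight k g H M P Q μ → ∀ x ∈ Hdot, μ x = 0

/-- An admissible chain `⋯ ⊆ N₂ ⊊ M₂ ⊆ N₁ ⊊ M₁ ⊆ M` of `g`-submodules of `M` (indices here
start at `0`): each `Mseq i` is generated by a single nonzero weight vector and each quotient
`Mseq i / Nseq i` is a simple `g`-module (equivalently, `Nseq i` is a maximal proper
submodule of `Mseq i`). -/
structure AdmissibleChain : Type _ where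
  Mseq : ℕ → LieSubmodule k g M
  Nseq : ℕ → LieSubmodule k g M
  proper : ∀ i, Nseq i < Mseq i
  descending : ∀ i, Mseq (i + 1) ≤ Nseq i
  generated : ∀ i, ∃ v : M, v ≠ 0 ∧ (∃ μ : ↥H →ₗ[k] k, IsWeightVec k g H M μ v) ∧
    Mseq i = LieSubmodule.lieSpan k g {v}
  simpleQuot : ∀ i, ∀ P : LieSubmodule k g M,
    Nseq i ≤ P → P ≤ Mseq i → P = Nseq i ∨ P = Mseq i

/-- The un-confined rank of an admissible chain: the cardinality of the set of indices whose
corresponding simple quotient is un-confined. -/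
noncomputable def unconfinedRank (C : AdmissibleChain k g H M) : ℕ∞ :=
  {i : ℕ | ¬ QuotConfined k g H Hdot M (C.Mseq i) (C.Nseq i)}.encard

/-- `C'` is an `n`-overlapped tail-extension of `C`. -/
def IsTailExtension (C C' : AdmissibleChain k g H M) (n : ℕ) : Prop :=
  ∀ i < n, C'.Mseq i = C.Mseq i ∧ C'.Nseq i = C.Nseq i

/-- The chain `C` is `n`-confined: all quotients beyond the first `n` are confined. -/
def IsNConfined (C : AdmissibleChain k g H M) (n : ℕ) : Prop :=
  ∀ i, n ≤ i → QuotConfined k g H Hdot M (C.Mseq i) (C.Nseq i)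

/-- The chain `C` is tail-`n`-confined: every `n`-overlapped tail-extension of `C` is
`n`-confined. -/
def IsTailNConfined (C : AdmissibleChain k g H M) (n : ℕ) : Prop :=
  ∀ C' : AdmissibleChain k g H M,
    IsTailExtension k g H M C C' n → IsNConfined k g H Hdot M C' n

theorem ENat.exists_forall_le_of_forall_le_natCast {α : Type*} [Nonempty α] (f : α → ℕ∞)
    (ℓ : ℕ) (h : ∀ a, f a ≤ ℓ) : ∃ a, ∀ b, f b ≤ f a := by
  have hfin : (Set.range f).Finite :=
    ((Set.finite_Iic ℓ).image ((↑) : ℕ → ℕ∞)).subset <| by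
      rintro _ ⟨a, rfl⟩
      obtain ⟨n, hn, hle⟩ := ENat.le_natCast_iff.mp (h a)
      exact ⟨n, hle, hn.symm⟩
  obtain ⟨_, ⟨a, rfl⟩, ha⟩ := Set.exists_max_image _ id hfin (Set.range_nonempty f)
  exact ⟨a, fun b => ha _ ⟨b, rfl⟩⟩

section

variable {k g H M}

def unconfinedIndices (C : AdmissibleChain k g H M) : Set ℕ :=
  {i | ¬ QuotConfined k g H Hdot M (C.Mseq i) (C.Nseq i)}

set_option linter.unusedSectionVars false in
theorem exists_isTailNConfined_of_forall_unconfinedRank_le (C : AdmissibleChain k g H M)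
    (hfin : unconfinedRank k g H Hdot M C ≠ ⊤)
    (hmax : ∀ C', unconfinedRank k g H Hdot M C' ≤ unconfinedRank k g H Hdot M C) :
    ∃ n, IsTailNConfined k g H Hdot M C n := by
  have hS : (unconfinedIndices Hdot C).Finite := Set.finite_of_encard_eq_coe
    (ENat.natCast_toNat hfin).symm
  obtain ⟨b, hb⟩ := hS.bddAbove
  refine ⟨b + 1, fun C' hext i hi => by_contra fun hi' => ?_⟩
  have hsub : unconfinedIndices Hdot C ⊂ unconfinedIndices Hdot C' := by
    refine Set.ssubset_iff_of_subset (fun j hj => ?_) |>.mpr ⟨i, hi', fun hiC => ?_⟩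
    · obtain ⟨hM, hN⟩ := hext j (Nat.lt_add_one_of_le (hb hj))
      change ¬ QuotConfined k g H Hdot M (C'.Mseq j) (C'.Nseq j)
      rwa [hM, hN]
    · exact absurd (hb hiC) (by omega)
  exact (hS.encard_lt_encard hsub).not_ge (hmax C')

end

theorem stmt_1
    (ℓ : ℕ)
    (hbound : ∀ C : AdmissibleChain k g H M, unconfinedRank k g H Hdot M C ≤ (ℓ : ℕ∞))
    (hex : Nonempty (AdmissibleChain k g H M)) :
    ∃ (k₀ : ℕ) (C : AdmissibleChain k g H M), IsTailNConfined k g H Hdot M C k₀ := by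
  obtain ⟨C, hC⟩ := ENat.exists_forall_le_of_forall_le_natCast _ ℓ hbound
  have hfin : unconfinedRank k g H Hdot M C ≠ ⊤ := ne_top_of_le_ne_top (by simp) (hbound C)
  obtain ⟨k₀, hk₀⟩ := exists_isTailNConfined_of_forall_unconfinedRank_le Hdot C hfin hC
  exact ⟨k₀, C, hk₀⟩
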